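/- arXiv:0908.0558 — 2 statements merged into one kernel-verified Lean document; each statement's English description precedes it below -/
import Mathlib

section
/- For every n ≥ 1 and every complex z outside [0,1] ∪ {t}, the function B_n admits the partial fraction decomposition B_n(z) = r*_n/z − r_n/(z−1) + (r_n − r*_n − n)/(z−t). -/
/-
The kernel `(v'(z) - v'(y)) / (z - y)` splits as
`α / (z y) + β / ((z - 1)(y - 1)) + γ / ((z - t)(y - t))`, so `B_n(z)` is a combination of three
weighted integrals of `P_{n-1} P_n`, the first two of which are `r*_n` and `r_n`. The third is
eliminated by integrating `(P_{n-1} P_n w)'` over `[0, 1]`: the boundary terms vanish as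
`α, β > 0`, `w' / w = γ / (y - t) + α / y - β / (1 - y)`, and by orthogonality
`∫ (P_{n-1} P_n)' w = n h_{n-1}` because `P_n' = n P_{n-1} + (lower degree)`. Hence
`γ ∫ P_{n-1} P_n w / (y - t) = h_{n-1} (r_n - r*_n - n)`.
-/

open MeasureTheory Real

/-- The generalized Jacobi weight `w(x;t) = (x-t)^γ x^α (1-x)^β`. -/
noncomputable def genJacobiWeight (α β γ t x : ℝ) : ℝ :=
  (x - t) ^ γ * x ^ α * (1 - x) ^ β

/-- `v'(z) = -α/z - β/(z-1) - γ/(z-t)` where `v(z) = -ln w(z;t)`. -/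
noncomputable def vprime (α β γ t : ℝ) (z : ℂ) : ℂ :=
  -(α : ℂ) / z - (β : ℂ) / (z - 1) - (γ : ℂ) / (z - (t : ℂ))

open Set Polynomial intervalIntegral

namespace Polynomial

variable {R : Type*} [CommRing R]

theorem degree_sub_C_coeff_mul_lt {p q : R[X]} {n : ℕ} (hp : p.degree ≤ n) (hq : q.Monic)
    (hqn : q.natDegree = n) : (p - C (p.coeff n) * q).degree < n := by
  rw [degree_lt_iff_coeff_zero]
  intro m hm
  rcases hm.eq_or_lt with rfl | hlt
  · simp [← hqn, hq.coeff_natDegree]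
  · simp [coeff_eq_zero_of_degree_lt (hp.trans_lt (WithBot.coe_lt_coe.mpr hlt)),
      coeff_eq_zero_of_natDegree_lt (hqn ▸ hlt)]

theorem mem_span_image_Iio_of_degree_lt {P : ℕ → R[X]}
    (hP : ∀ k, (P k).Monic ∧ (P k).natDegree = k) {n : ℕ} {p : R[X]} (hp : p.degree < n) :
    p ∈ Submodule.span R (P '' Iio n) := by
  induction n generalizing p with
  | zero => simp [degree_eq_bot.mp (Nat.WithBot.lt_zero_iff.mp hp)]
  | succ n ih =>
    have hdecomp : p = p.coeff n • P n + (p - C (p.coeff n) * P n) := by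
      rw [smul_eq_C_mul]; ring
    rw [hdecomp]
    refine Submodule.add_mem _
      (Submodule.smul_mem _ _ (Submodule.subset_span ⟨n, by simp, rfl⟩))
      (Submodule.span_mono (image_mono (Iio_subset_Iio n.le_succ)) (ih ?_))
    exact degree_sub_C_coeff_mul_lt (Order.le_of_lt_succ (by exact_mod_cast hp)) (hP n).1 (hP n).2

end Polynomial

theorem IntervalIntegrable.ofReal {f : ℝ → ℝ} {a b : ℝ} {μ : Measure ℝ}
    (hf : IntervalIntegrable f μ a b) : IntervalIntegrable (fun x => (f x : ℂ)) μ a b :=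
  ⟨hf.1.ofReal, hf.2.ofReal⟩

section Orthogonal

variable {a b : ℝ} {P : ℕ → ℝ[X]}

theorem IntervalIntegrable.eval_mul {g : ℝ → ℝ} (hg : IntervalIntegrable g volume a b)
    (q : ℝ[X]) : IntervalIntegrable (fun x => q.eval x * g x) volume a b :=
  hg.continuousOn_mul q.continuous.continuousOn

theorem integral_eval_mul_eq_zero_of_degree_lt (hP : ∀ k, (P k).Monic ∧ (P k).natDegree = k)
    {g : ℝ → ℝ} (hg : IntervalIntegrable g volume a b) {n : ℕ}
    (horth : ∀ k < n, ∫ x in a..b, (P k).eval x * g x = 0) {p : ℝ[X]} (hp : p.degree < n) :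
    ∫ x in a..b, p.eval x * g x = 0 := by
  refine Submodule.span_induction (p := fun q _ => ∫ x in a..b, q.eval x * g x = 0) ?_ ?_ ?_ ?_
    (mem_span_image_Iio_of_degree_lt hP hp)
  · rintro _ ⟨k, hk, rfl⟩
    exact horth k hk
  · simp
  · intro q r _ _ hq hr
    simp [add_mul, integral_add (hg.eval_mul q) (hg.eval_mul r), hq, hr]
  · intro c q _ hq
    simp [mul_assoc, hq]

theorem integral_eval_mul_eq_coeff_mul (hP : ∀ k, (P k).Monic ∧ (P k).natDegree = k)
    {w : ℝ → ℝ} (hw : IntervalIntegrable w volume a b) {h : ℕ → ℝ}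
    (horth : ∀ m n, ∫ x in a..b, (P m).eval x * (P n).eval x * w x = if m = n then h n else 0)
    {n : ℕ} {p : ℝ[X]} (hp : p.degree ≤ n) :
    ∫ x in a..b, p.eval x * (P n).eval x * w x = p.coeff n * h n := by
  set g := fun x => (P n).eval x * w x
  have hg : IntervalIntegrable g volume a b := hw.eval_mul (P n)
  set r := p - C (p.coeff n) * P n
  have hr : ∫ x in a..b, r.eval x * g x = 0 := by
    refine integral_eval_mul_eq_zero_of_degree_lt hP hg (fun k hk => ?_)
      (degree_sub_C_coeff_mul_lt hp (hP n).1 (hP n).2)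
    simpa [g, mul_assoc, hk.ne] using horth k n
  have hsplit : ∀ x, p.eval x * (P n).eval x * w x
      = p.coeff n * ((P n).eval x * g x) + r.eval x * g x := by
    intro x; simp only [r, g, eval_sub, eval_mul, eval_C]; ring
  have hnorm : ∫ x in a..b, (P n).eval x * g x = h n := by
    simpa [g, mul_assoc] using horth n n
  simp_rw [hsplit]
  rw [integral_add ((hg.eval_mul (P n)).const_mul _) (hg.eval_mul r),
    intervalIntegral.integral_const_mul, hnorm, hr, add_zero]

theorem integral_derivative_mul_succ_mul (hP : ∀ k, (P k).Monic ∧ (P k).natDegree = k)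
    {w : ℝ → ℝ} (hw : IntervalIntegrable w volume a b) {h : ℕ → ℝ}
    (horth : ∀ m n, ∫ x in a..b, (P m).eval x * (P n).eval x * w x = if m = n then h n else 0)
    (n : ℕ) : ∫ x in a..b, (derivative (P n * P (n + 1))).eval x * w x = (n + 1) * h n := by
  have hdeg (k : ℕ) : (P k).degree = k := by
    rw [degree_eq_natDegree (hP k).1.ne_zero, (hP k).2]
  have hlead (k : ℕ) : (P k).coeff k = 1 := by simpa [(hP k).2] using (hP k).1.coeff_natDegree
  have hfirst : ∫ x in a..b, (derivative (P n)).eval x * (P (n + 1)).eval x * w x = 0 := by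
    rw [integral_eval_mul_eq_coeff_mul hP hw horth
      (degree_derivative_le.trans ((hdeg n).trans_le (by exact_mod_cast n.le_succ))),
      coeff_derivative,
      coeff_eq_zero_of_degree_lt (by rw [hdeg]; exact_mod_cast (by omega : n < n + 1 + 1)),
      zero_mul, zero_mul]
  have hsecond : ∫ x in a..b, (derivative (P (n + 1))).eval x * (P n).eval x * w x
      = (n + 1) * h n := by
    rw [integral_eval_mul_eq_coeff_mul hP hw horth (degree_le_of_natDegree_le
      ((natDegree_derivative_le _).trans (by simp [(hP _).2]))), coeff_derivative,
      hlead, one_mul]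
  have hsplit : ∀ x, (derivative (P n * P (n + 1))).eval x * w x
      = (derivative (P n)).eval x * (P (n + 1)).eval x * w x
        + (derivative (P (n + 1))).eval x * (P n).eval x * w x := by
    intro x; simp only [derivative_mul, eval_add, eval_mul]; ring
  simp_rw [hsplit]
  rw [integral_add (by simpa only [eval_mul] using hw.eval_mul (derivative (P n) * P (n + 1)))
    (by simpa only [eval_mul] using hw.eval_mul (derivative (P (n + 1)) * P n)), hfirst, hsecond,
    zero_add]

end Orthogonal

section Weight

variable {α β γ t : ℝ}

theorem continuousOn_sub_rpow (ht : t < 0) :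
    ContinuousOn (fun x : ℝ => (x - t) ^ γ) (Icc 0 1) :=
  (continuousOn_id.sub continuousOn_const).rpow_const fun x hx =>
    Or.inl (sub_pos.mpr (show t < x by linarith [hx.1])).ne'

theorem continuousOn_genJacobiWeight (hα : 0 ≤ α) (hβ : 0 ≤ β) (ht : t < 0) :
    ContinuousOn (genJacobiWeight α β γ t) (Icc 0 1) :=
  ((continuousOn_sub_rpow ht).mul (continuousOn_id.rpow_const fun _ _ => Or.inr hα)).mul
    ((continuousOn_const.sub continuousOn_id).rpow_const fun _ _ => Or.inr hβ)

theorem genJacobiWeight_zero (hα : α ≠ 0) : genJacobiWeight α β γ t 0 = 0 := by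
  simp [genJacobiWeight, zero_rpow hα]

theorem genJacobiWeight_one (hβ : β ≠ 0) : genJacobiWeight α β γ t 1 = 0 := by
  simp [genJacobiWeight, zero_rpow hβ]

theorem intervalIntegrable_mul_genJacobiWeight (hα : 0 ≤ α) (hβ : 0 ≤ β) (ht : t < 0)
    {q : ℝ → ℝ} (hq : ContinuousOn q (Icc 0 1)) :
    IntervalIntegrable (fun x => q x * genJacobiWeight α β γ t x) volume 0 1 :=
  (hq.mul (continuousOn_genJacobiWeight hα hβ ht)).intervalIntegrable_of_Icc zero_le_one

theorem intervalIntegrable_mul_genJacobiWeight_div_sub (hα : 0 ≤ α) (hβ : 0 ≤ β)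
    (ht : t < 0) {q : ℝ → ℝ} (hq : ContinuousOn q (Icc 0 1)) :
    IntervalIntegrable (fun x => q x * genJacobiWeight α β γ t x / (x - t)) volume 0 1 := by
  have hq' : ContinuousOn (fun x => q x / (x - t)) (Icc 0 1) :=
    hq.div (continuousOn_id.sub continuousOn_const) fun x hx => by linarith [hx.1]
  simpa only [div_mul_eq_mul_div] using intervalIntegrable_mul_genJacobiWeight hα hβ ht hq'

theorem intervalIntegrable_mul_genJacobiWeight_div_self (hα : 0 < α) (hβ : 0 ≤ β) (ht : t < 0)
    {q : ℝ → ℝ} (hq : ContinuousOn q (Icc 0 1)) :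
    IntervalIntegrable (fun x => q x * genJacobiWeight α β γ t x / x) volume 0 1 := by
  have hreg : ContinuousOn (fun x : ℝ => q x * ((x - t) ^ γ * (1 - x) ^ β)) (uIcc 0 1) := by
    rw [uIcc_of_le zero_le_one]
    exact hq.mul ((continuousOn_sub_rpow ht).mul
      ((continuousOn_const.sub continuousOn_id).rpow_const fun _ _ => Or.inr hβ))
  have hsing := (intervalIntegral.intervalIntegrable_rpow' (a := 0) (b := 1)
    (by linarith : -1 < α - 1)).continuousOn_mul hreg
  rw [intervalIntegrable_iff_integrableOn_Ioo_of_le zero_le_one] at hsing ⊢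
  refine hsing.congr_fun (fun x hx => ?_) measurableSet_Ioo
  simp only [genJacobiWeight, rpow_sub_one hx.1.ne']
  ring

theorem intervalIntegrable_mul_genJacobiWeight_div_one_sub (hα : 0 ≤ α) (hβ : 0 < β)
    (ht : t < 0) {q : ℝ → ℝ} (hq : ContinuousOn q (Icc 0 1)) :
    IntervalIntegrable (fun x => q x * genJacobiWeight α β γ t x / (1 - x)) volume 0 1 := by
  have hreg : ContinuousOn (fun x : ℝ => q x * ((x - t) ^ γ * x ^ α)) (uIcc 0 1) := by
    rw [uIcc_of_le zero_le_one]
    exact hq.mul ((continuousOn_sub_rpow ht).mul (continuousOn_id.rpow_const fun _ _ => Or.inr hα))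
  have hsing : IntervalIntegrable (fun x : ℝ => (1 - x) ^ (β - 1)) volume 0 1 := by
    simpa using ((intervalIntegral.intervalIntegrable_rpow' (a := 0) (b := 1)
      (by linarith : -1 < β - 1)).comp_sub_left 1).symm
  have h := hsing.continuousOn_mul hreg
  rw [intervalIntegrable_iff_integrableOn_Ioo_of_le zero_le_one] at h ⊢
  refine h.congr_fun (fun x hx => ?_) measurableSet_Ioo
  simp only [genJacobiWeight, rpow_sub_one (sub_pos.mpr hx.2).ne']
  ring

theorem hasDerivAt_genJacobiWeight {x : ℝ} (htx : t < x) (hx0 : 0 < x) (hx1 : x < 1) :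
    HasDerivAt (genJacobiWeight α β γ t)
      (genJacobiWeight α β γ t x * (γ / (x - t) + α / x - β / (1 - x))) x := by
  have hxt : 0 < x - t := sub_pos.mpr htx
  have h1x : 0 < 1 - x := sub_pos.mpr hx1
  have hA : HasDerivAt (fun u : ℝ => (u - t) ^ γ) (γ * (x - t) ^ (γ - 1)) x := by
    simpa using ((hasDerivAt_id x).sub_const t).rpow_const (p := γ) (Or.inl hxt.ne')
  have hB : HasDerivAt (fun u : ℝ => u ^ α) (α * x ^ (α - 1)) x :=
    hasDerivAt_rpow_const (Or.inl hx0.ne')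
  have hC : HasDerivAt (fun u : ℝ => (1 - u) ^ β) (-(β * (1 - x) ^ (β - 1))) x := by
    simpa using ((hasDerivAt_id x).const_sub 1).rpow_const (p := β) (Or.inl h1x.ne')
  refine ((hA.mul hB).mul hC).congr_deriv ?_
  simp only [genJacobiWeight, Pi.mul_apply, rpow_sub_one hxt.ne', rpow_sub_one hx0.ne',
    rpow_sub_one h1x.ne']
  field_simp
  ring

theorem integral_derivative_mul_genJacobiWeight (hα : 0 < α) (hβ : 0 < β) (ht : t < 0)
    (Q : ℝ[X]) :
    ∫ x in (0:ℝ)..1, (derivative Q).eval x * genJacobiWeight α β γ t x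
      = β * (∫ x in (0:ℝ)..1, Q.eval x * genJacobiWeight α β γ t x / (1 - x))
        - α * (∫ x in (0:ℝ)..1, Q.eval x * genJacobiWeight α β γ t x / x)
        - γ * ∫ x in (0:ℝ)..1, Q.eval x * genJacobiWeight α β γ t x / (x - t) := by
  set w := genJacobiWeight α β γ t
  have hQ : ContinuousOn (fun x => Q.eval x) (Icc 0 1) := Q.continuous.continuousOn
  have hI₀ := intervalIntegrable_mul_genJacobiWeight (γ := γ) hα.le hβ.le ht
    (derivative Q).continuous.continuousOn
  have hIt :=
    (intervalIntegrable_mul_genJacobiWeight_div_sub (γ := γ) hα.le hβ.le ht hQ).const_mul γ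
  have hI0 :=
    (intervalIntegrable_mul_genJacobiWeight_div_self (γ := γ) hα hβ.le ht hQ).const_mul α
  have hI1 :=
    (intervalIntegrable_mul_genJacobiWeight_div_one_sub (γ := γ) hα.le hβ ht hQ).const_mul β
  have hderiv : ∀ x ∈ Ioo (0:ℝ) 1, HasDerivAt (fun x => Q.eval x * w x)
      ((derivative Q).eval x * w x + γ * (Q.eval x * w x / (x - t))
        + α * (Q.eval x * w x / x) - β * (Q.eval x * w x / (1 - x))) x := by
    intro x hx
    refine ((Q.hasDerivAt x).mul (hasDerivAt_genJacobiWeight (by linarith [hx.1]) hx.1 hx.2))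
      |>.congr_deriv ?_
    ring
  have hFTC := integral_eq_sub_of_hasDerivAt_of_le zero_le_one
    (hQ.mul (continuousOn_genJacobiWeight hα.le hβ.le ht)) hderiv
    (((hI₀.add hIt).add hI0).sub hI1)
  rw [integral_sub ((hI₀.add hIt).add hI0) hI1, integral_add (hI₀.add hIt) hI0,
    integral_add hI₀ hIt, intervalIntegral.integral_const_mul,
    intervalIntegral.integral_const_mul, intervalIntegral.integral_const_mul] at hFTC
  simp only [Pi.mul_apply, genJacobiWeight_one hβ.ne', genJacobiWeight_zero hα.ne', mul_zero,
    sub_zero] at hFTC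
  linarith

end Weight

section Kernel

variable {α β γ t : ℝ}

theorem vprime_sub_vprime_div_sub {z y : ℂ} (hz0 : z ≠ 0) (hz1 : z ≠ 1) (hzt : z ≠ t)
    (hy0 : y ≠ 0) (hy1 : y ≠ 1) (hyt : y ≠ t) (hzy : z ≠ y) :
    (vprime α β γ t z - vprime α β γ t y) / (z - y)
      = α / (z * y) + β / ((z - 1) * (y - 1)) + γ / ((z - t) * (y - t)) := by
  unfold vprime
  field_simp
  ring

theorem integral_vprime_sub_vprime_div_sub (hα : 0 < α) (hβ : 0 < β) (ht : t < 0) {z : ℂ}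
    (hz : ∀ x ∈ Icc (0:ℝ) 1, z ≠ x) (hzt : z ≠ t) {p q : ℝ → ℝ}
    (hp : ContinuousOn p (Icc 0 1)) (hq : ContinuousOn q (Icc 0 1)) :
    ∫ y in (0:ℝ)..1, (vprime α β γ t z - vprime α β γ t y) / (z - y)
        * (p y : ℂ) * (q y : ℂ) * (genJacobiWeight α β γ t y : ℂ)
      = α / z * ↑(∫ y in (0:ℝ)..1, p y * q y * genJacobiWeight α β γ t y / y)
        - β / (z - 1)
          * ↑(∫ y in (0:ℝ)..1, p y * q y * genJacobiWeight α β γ t y / (1 - y))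
        + γ / (z - t)
          * ↑(∫ y in (0:ℝ)..1, p y * q y * genJacobiWeight α β γ t y / (y - t)) := by
  have hpq : ContinuousOn (fun y => p y * q y) (Icc 0 1) := hp.mul hq
  have hI0 := (intervalIntegrable_mul_genJacobiWeight_div_self (γ := γ) hα hβ.le ht hpq).ofReal
  have hI1 :=
    (intervalIntegrable_mul_genJacobiWeight_div_one_sub (γ := γ) hα.le hβ ht hpq).ofReal
  have hIt :=
    (intervalIntegrable_mul_genJacobiWeight_div_sub (γ := γ) hα.le hβ.le ht hpq).ofReal
  have hz0 : z ≠ 0 := by simpa using hz 0 (by simp)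
  have hz1 : z ≠ 1 := by simpa using hz 1 (by simp)
  rw [← intervalIntegral.integral_ofReal, ← intervalIntegral.integral_ofReal,
    ← intervalIntegral.integral_ofReal, ← intervalIntegral.integral_const_mul,
    ← intervalIntegral.integral_const_mul, ← intervalIntegral.integral_const_mul,
    ← integral_sub (hI0.const_mul _) (hI1.const_mul _),
    ← integral_add ((hI0.const_mul _).sub (hI1.const_mul _)) (hIt.const_mul _)]
  refine integral_congr_ae ?_
  filter_upwards [Measure.ae_ne volume 1] with y hy1 hy
  rw [uIoc_of_le zero_le_one] at hy
  have hy0 : (y : ℂ) ≠ 0 := by exact_mod_cast hy.1.ne'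
  have hy1' : (y : ℂ) ≠ 1 := by exact_mod_cast hy1
  have hyt : (y : ℂ) ≠ t := by exact_mod_cast (by linarith [hy.1] : y ≠ t)
  rw [vprime_sub_vprime_div_sub hz0 hz1 hzt hy0 hy1' hyt (hz y (Ioc_subset_Icc_self hy))]
  push_cast
  field_simp
  ring

end Kernel

theorem statement7
    (α β γ t : ℝ) (hα : 0 < α) (hβ : 0 < β) (ht : t < 0)
    (P : ℕ → Polynomial ℝ) (h : ℕ → ℝ)
    (hmonic : ∀ n, (P n).Monic ∧ (P n).natDegree = n)
    (hpos : ∀ n, 0 < h n)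
    (horth : ∀ m n, (∫ x in (0:ℝ)..1,
        (P m).eval x * (P n).eval x * genJacobiWeight α β γ t x)
      = if m = n then h n else 0)
    (B : ℕ → ℂ → ℂ)
    (hB : ∀ n, 1 ≤ n → ∀ z : ℂ, B n z = (1 / (h (n - 1) : ℂ)) *
      ∫ y in (0:ℝ)..1, (vprime α β γ t z - vprime α β γ t (y : ℂ)) / (z - (y : ℂ))
        * Complex.ofReal ((P (n - 1)).eval y) * Complex.ofReal ((P n).eval y)
        * Complex.ofReal (genJacobiWeight α β γ t y))
    (r rs : ℕ → ℝ)
    (hr : ∀ n, 1 ≤ n → r n = β / h (n - 1) *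
      ∫ y in (0:ℝ)..1, (P (n - 1)).eval y * (P n).eval y * genJacobiWeight α β γ t y / (1 - y))
    (hrs : ∀ n, 1 ≤ n → rs n = α / h (n - 1) *
      ∫ y in (0:ℝ)..1, (P (n - 1)).eval y * (P n).eval y * genJacobiWeight α β γ t y / y)
    :
    ∀ n : ℕ, 1 ≤ n → ∀ z : ℂ, (∀ x ∈ Set.Icc (0:ℝ) 1, z ≠ (x : ℂ)) → z ≠ (t : ℂ) →
      B n z = (rs n : ℂ) / z - (r n : ℂ) / (z - 1)
        + ((r n : ℂ) - (rs n : ℂ) - (n : ℂ)) / (z - (t : ℂ)) := by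
  rintro n hn z hz hzt
  obtain ⟨m, rfl⟩ : ∃ m, n = m + 1 := ⟨n - 1, by omega⟩
  have hw : IntervalIntegrable (genJacobiWeight α β γ t) volume 0 1 :=
    (continuousOn_genJacobiWeight hα.le hβ.le ht).intervalIntegrable_of_Icc zero_le_one
  have hparts := integral_derivative_mul_genJacobiWeight (γ := γ) hα hβ ht (P m * P (m + 1))
  rw [integral_derivative_mul_succ_mul hmonic hw horth] at hparts
  simp only [eval_mul] at hparts
  rw [hB _ hn, hr _ hn, hrs _ hn, Nat.add_sub_cancel, integral_vprime_sub_vprime_div_sub hα hβ ht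
    hz hzt (P m).continuous.continuousOn (P (m + 1)).continuous.continuousOn]
  have hz0 : z ≠ 0 := by simpa using hz 0 (by simp)
  have hz1 : z ≠ 1 := by simpa using hz 1 (by simp)
  have hh : (h m : ℂ) ≠ 0 := by exact_mod_cast (hpos m).ne'
  have hpartsC := congrArg Complex.ofReal hparts
  push_cast at hpartsC ⊢
  field_simp
  linear_combination z * (z - 1) * hpartsC
end

section
/- For every n ≥ 0 the recurrence coefficient α_n satisfies (2n+2+α+β+γ)α_n = 2(t−1)r_n − 2t r*_n + (1−t)R_n + (α+β+1)t − β. -/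
/-!
Write `L q = ∫₀¹ q w` for polynomials `q`. As `w` vanishes at `0` and `1` and
`w'/w = γ/(x-t) + α/x - β/(1-x)`, integrating `((x-t) F w)'` over `[0,1]` gives, for every `F`,
`L ((1+α+β+γ) F + (x-t) F') = α t ∫ F w / x + β (1-t) ∫ F w / (1-x)`.
Let `e_n` be the coefficient of `x^(n-1)` in `(x-t) P_n' - n P_n`, a polynomial of degree `< n`.
Orthogonality evaluates the left side for `F = P_{n-1} P_n` as `e_n h_{n-1}`, so
`e_n = t r*_n + (1-t) r_n`; for `F = x P_n²`, where `∫ x P_n² w = α_n h_n` by the recurrence,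
it yields `(2n+2+α+β+γ) α_n = (1-t) R_n + (α+β+1) t - β - 2 e_n`.
-/

open MeasureTheory Real

open Polynomial Set

namespace Polynomial

variable {R M : Type*} [CommRing R] [AddCommGroup M] [Module R M]

theorem linearMap_apply_eq_coeff_smul (L : R[X] →ₗ[R] M) {P : ℕ → R[X]}
    (hP : ∀ n, (P n).Monic ∧ (P n).natDegree = n) {n : ℕ} (hL : ∀ m < n, L (P m) = 0)
    {q : R[X]} (hq : q.natDegree ≤ n) : L q = q.coeff n • L (P n) := by
  induction n generalizing q with
  | zero =>
    rw [eq_one_of_monic_natDegree_zero (hP 0).1 (hP 0).2, eq_C_of_natDegree_le_zero hq,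
      coeff_C_zero, ← mul_one (C _), ← smul_eq_C_mul, map_smul]
  | succ n ih =>
    have hlead : (P (n + 1)).coeff (n + 1) = 1 := by
      simpa [(hP (n + 1)).2] using (hP (n + 1)).1.coeff_natDegree
    set q' := q - q.coeff (n + 1) • P (n + 1)
    have hq' : q'.natDegree ≤ n := by
      refine natDegree_le_pred (p := q') (n := n + 1) ?_ ?_
      · exact (natDegree_sub_le_of_le hq ((natDegree_smul_le _ _).trans (hP _).2.le)).trans
          (by simp)
      · simp [q', hlead]
    have hL' : L q' = 0 := by
      rw [ih (fun m hm => hL m (by omega)) hq', hL n (by omega), smul_zero]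
    calc L q = L q' + q.coeff (n + 1) • L (P (n + 1)) := by simp [q']
      _ = q.coeff (n + 1) • L (P (n + 1)) := by rw [hL', zero_add]

theorem linearMap_mul_eq_coeff_mul (L : R[X] →ₗ[R] R) {P : ℕ → R[X]}
    (hP : ∀ n, (P n).Monic ∧ (P n).natDegree = n) {h : ℕ → R}
    (horth : ∀ m n, L (P m * P n) = if m = n then h n else 0) {n : ℕ} {q : R[X]}
    (hq : q.natDegree ≤ n) : L (q * P n) = q.coeff n * h n := by
  have := linearMap_apply_eq_coeff_smul (L.comp (LinearMap.mulRight R (P n))) hP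
    (fun m hm => by simpa [hm.ne] using horth m n) hq
  simpa [horth] using this

theorem natDegree_X_sub_C_mul_derivative_le (p : R[X]) (t : R) :
    ((X - C t) * derivative p).natDegree ≤ p.natDegree := by
  rcases Nat.eq_zero_or_pos p.natDegree with h0 | hpos
  · simp [derivative_of_natDegree_zero h0]
  · calc ((X - C t) * derivative p).natDegree
        ≤ (X - C t).natDegree + (derivative p).natDegree := natDegree_mul_le
      _ ≤ 1 + (p.natDegree - 1) := add_le_add (natDegree_X_sub_C_le t) (natDegree_derivative_le p)
      _ = p.natDegree := by omega

theorem coeff_X_sub_C_mul_derivative_sub_natDegree_mul {p : R[X]} (hp : p.Monic) (t : R) :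
    ((X - C t) * derivative p - C (p.natDegree : R) * p).coeff p.natDegree = 0 := by
  rcases hn : p.natDegree with _ | k
  · simp [derivative_of_natDegree_zero hn]
  · have hlead : p.coeff (k + 1) = 1 := by simpa [hn] using hp.coeff_natDegree
    rw [coeff_sub, mul_comm, coeff_mul_X_sub_C, coeff_derivative, coeff_derivative,
      coeff_eq_zero_of_natDegree_lt (by omega : p.natDegree < k + 1 + 1), coeff_C_mul, hlead]
    push_cast
    ring

theorem natDegree_X_sub_C_mul_derivative_sub_C_mul_le (p : R[X]) (t r : R) :
    ((X - C t) * derivative p - C r * p).natDegree ≤ p.natDegree :=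
  (natDegree_sub_le_of_le (natDegree_X_sub_C_mul_derivative_le p t) (natDegree_C_mul_le r p)).trans
    (max_self _).le

variable {L M : R[X] →ₗ[R] R} {P : ℕ → R[X]} {h : ℕ → R} {c t : R}

theorem linearMap_mul_succ_eq_of_by_parts (hP : ∀ n, (P n).Monic ∧ (P n).natDegree = n)
    (horth : ∀ m n, L (P m * P n) = if m = n then h n else 0)
    (hibp : ∀ F, L (C c * F + (X - C t) * derivative F) = M F) (m : ℕ) :
    M (P m * P (m + 1))
      = (X * ((X - C t) * derivative (P (m + 1)) - C ((m + 1 : ℕ) : R) * P (m + 1))).coeff (m + 1)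
        * h m := by
  set E := (X - C t) * derivative (P (m + 1)) - C ((m + 1 : ℕ) : R) * P (m + 1)
  have hE : E.natDegree ≤ m := by
    have hcoeff := coeff_X_sub_C_mul_derivative_sub_natDegree_mul (hP (m + 1)).1 t
    rw [(hP _).2] at hcoeff
    exact natDegree_le_pred
      ((natDegree_X_sub_C_mul_derivative_sub_C_mul_le _ t _).trans (hP (m + 1)).2.le) hcoeff
  have hA : (C (c + (m + 1 : ℕ)) * P m + (X - C t) * derivative (P m)).natDegree < m + 1 := by
    have := natDegree_add_le_of_degree_le (natDegree_C_mul_le (c + (m + 1 : ℕ)) (P m))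
      (natDegree_X_sub_C_mul_derivative_le (P m) t)
    rw [(hP m).2] at this
    omega
  rw [← hibp, show C c * (P m * P (m + 1)) + (X - C t) * derivative (P m * P (m + 1))
      = (C (c + (m + 1 : ℕ)) * P m + (X - C t) * derivative (P m)) * P (m + 1) + E * P m by
    simp only [E, derivative_mul, C_add]; ring]
  rw [map_add, linearMap_mul_eq_coeff_mul L hP horth hA.le, coeff_eq_zero_of_natDegree_lt hA,
    linearMap_mul_eq_coeff_mul L hP horth hE, coeff_X_mul, zero_mul, zero_add]

-- `(X * q).coeff n` is `q.coeff (n - 1)` without the truncated subtraction: it is `0` at `n = 0`.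
theorem linearMap_X_mul_sq_eq_of_by_parts (hP : ∀ n, (P n).Monic ∧ (P n).natDegree = n)
    (horth : ∀ m n, L (P m * P n) = if m = n then h n else 0)
    (hibp : ∀ F, L (C c * F + (X - C t) * derivative F) = M F) (n : ℕ) :
    M (X * P n ^ 2) = (c + 1 + 2 * n) * L (X * P n * P n) - t * h n
      + 2 * (X * ((X - C t) * derivative (P n) - C (n : R) * P n)).coeff n * h n := by
  set E := (X - C t) * derivative (P n) - C (n : R) * P n
  have hXE : (X * E).natDegree ≤ n := by
    have hcoeff := coeff_X_sub_C_mul_derivative_sub_natDegree_mul (hP n).1 t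
    rw [(hP _).2] at hcoeff
    have hle : (X * E).natDegree ≤ 1 + n := natDegree_mul_le_of_le natDegree_X_le
      ((natDegree_X_sub_C_mul_derivative_sub_C_mul_le (P n) t n).trans (hP n).2.le)
    exact natDegree_le_pred (n := n + 1) (by omega) (by rwa [coeff_X_mul])
  rw [← hibp, show C c * (X * P n ^ 2) + (X - C t) * derivative (X * P n ^ 2)
      = C (c + 1 + 2 * n) * (X * P n * P n) - C t * (P n * P n) + C 2 * (X * E * P n) by
    simp only [E, derivative_mul, derivative_X, derivative_sq, C_add, C_mul, C_1, C_ofNat]; ring]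
  simp only [C_mul', LinearMap.map_add, LinearMap.map_sub, LinearMap.map_smul, smul_eq_mul]
  rw [horth, if_pos rfl, linearMap_mul_eq_coeff_mul L hP horth hXE]
  ring

theorem linearMap_X_mul_mul_eq
    (horth : ∀ m n, L (P m * P n) = if m = n then h n else 0) {a b : ℕ → R} (hb0 : b 0 = 0)
    (hrec : ∀ n, X * P n = P (n + 1) + C (a n) * P n + C (b n) * P (n - 1)) (n : ℕ) :
    L (X * P n * P n) = a n * h n := by
  have hb : b n * L (P (n - 1) * P n) = 0 := by
    rcases n with _ | m
    · simp [hb0]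
    · simp [horth]
  rw [hrec, add_mul, add_mul, map_add, map_add, mul_assoc, mul_assoc, C_mul', C_mul', map_smul,
    map_smul, smul_eq_mul, smul_eq_mul, hb, horth, horth]
  simp

end Polynomial

theorem intervalIntegrable_rpow_mul_one_sub_rpow {a b : ℝ} (ha : -1 < a) (hb : -1 < b) :
    IntervalIntegrable (fun x : ℝ => x ^ a * (1 - x) ^ b) volume 0 1 := by
  have hbeta := (Complex.betaIntegral_convergent (u := a + 1) (v := b + 1)
    (by simpa using neg_lt_iff_pos_add.mp ha) (by simpa using neg_lt_iff_pos_add.mp hb)).norm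
  refine hbeta.congr fun x hx => ?_
  rw [uIoc_of_le zero_le_one] at hx
  have h1 : (1 - (x : ℂ)) = ((1 - x : ℝ) : ℂ) := by push_cast; ring
  simp only [add_sub_cancel_right, h1]
  rw [← Complex.ofReal_cpow hx.1.le, ← Complex.ofReal_cpow (sub_nonneg.mpr hx.2), norm_mul,
    Complex.norm_real, Complex.norm_real, Real.norm_of_nonneg (rpow_nonneg hx.1.le _),
    Real.norm_of_nonneg (rpow_nonneg (sub_nonneg.mpr hx.2) _)]

theorem intervalIntegrable_of_eqOn_Ioo {f g : ℝ → ℝ} {a b : ℝ} (hab : a ≤ b)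
    (hfg : EqOn f g (Ioo a b)) (hf : IntervalIntegrable f volume a b) :
    IntervalIntegrable g volume a b := by
  rw [intervalIntegrable_iff_integrableOn_Ioo_of_le hab] at hf ⊢
  exact hf.congr_fun hfg measurableSet_Ioo

noncomputable def polyIntegral (f : ℝ → ℝ) (a b : ℝ)
    (hf : ∀ q : ℝ[X], IntervalIntegrable (fun x => q.eval x * f x) volume a b) :
    ℝ[X] →ₗ[ℝ] ℝ where
  toFun q := ∫ x in a..b, q.eval x * f x
  map_add' p q := by
    simp only [eval_add, add_mul]
    exact intervalIntegral.integral_add (hf p) (hf q)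
  map_smul' c q := by
    simp only [eval_smul, smul_eq_mul, mul_assoc, intervalIntegral.integral_const_mul,
      RingHom.id_apply]

theorem integral_eval_X_mul_mul_div_self {f : ℝ → ℝ} (hf : f 0 = 0) (q : ℝ[X]) (a b : ℝ) :
    ∫ x in a..b, (X * q).eval x * (f x / x) = ∫ x in a..b, q.eval x * f x := by
  refine intervalIntegral.integral_congr fun x _ => ?_
  rcases eq_or_ne x 0 with rfl | hx
  · simp [hf]
  · simp only [eval_mul, eval_X]
    field_simp

theorem integral_eval_one_sub_X_mul_mul_div_one_sub {f : ℝ → ℝ} (hf : f 1 = 0) (q : ℝ[X])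
    (a b : ℝ) :
    ∫ x in a..b, ((1 - X) * q).eval x * (f x / (1 - x)) = ∫ x in a..b, q.eval x * f x := by
  refine intervalIntegral.integral_congr fun x _ => ?_
  rcases eq_or_ne x 1 with rfl | hx
  · simp [hf]
  · have : 1 - x ≠ 0 := sub_ne_zero.mpr hx.symm
    simp only [eval_mul, eval_sub, eval_one, eval_X]
    field_simp

namespace genJacobiWeight

variable {α β γ t : ℝ}

theorem apply_zero (hα : 0 < α) : genJacobiWeight α β γ t 0 = 0 := by
  simp [genJacobiWeight, zero_rpow hα.ne']

theorem apply_one (hβ : 0 < β) : genJacobiWeight α β γ t 1 = 0 := by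
  simp [genJacobiWeight, zero_rpow hβ.ne']

theorem continuousOn (hα : 0 < α) (hβ : 0 < β) (ht : t < 0) :
    ContinuousOn (genJacobiWeight α β γ t) (Icc 0 1) := by
  refine ((ContinuousOn.rpow_const (by fun_prop) fun x hx => ?_).mul
    (ContinuousOn.rpow_const (by fun_prop) fun _ _ => Or.inr hα.le)).mul
    (ContinuousOn.rpow_const (by fun_prop) fun _ _ => Or.inr hβ.le)
  exact Or.inl (by linarith [hx.1])

theorem hasDerivAt (ht : t < 0) {x : ℝ} (hx : x ∈ Ioo (0 : ℝ) 1) :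
    HasDerivAt (genJacobiWeight α β γ t)
      (genJacobiWeight α β γ t x * (γ / (x - t) + α / x - β / (1 - x))) x := by
  have hxt : x - t ≠ 0 := by linarith [hx.1]
  have hx0 : x ≠ 0 := hx.1.ne'
  have hx1 : 1 - x ≠ 0 := by linarith [hx.2]
  refine ((((hasDerivAt_id' x).sub_const t).rpow_const (p := γ) (Or.inl hxt)).mul
    ((hasDerivAt_id' x).rpow_const (p := α) (Or.inl hx0))).mul
    (((hasDerivAt_id' x).const_sub 1).rpow_const (p := β) (Or.inl hx1)) |>.congr_deriv ?_
  simp only [genJacobiWeight, Pi.mul_apply, rpow_sub_one hxt, rpow_sub_one hx0, rpow_sub_one hx1]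
  field_simp
  ring

theorem intervalIntegrable_rpow_mul_one_sub_rpow_mul_eval (ht : t < 0) {a b : ℝ} (ha : -1 < a)
    (hb : -1 < b) (q : ℝ[X]) :
    IntervalIntegrable (fun x => x ^ a * (1 - x) ^ b * (q.eval x * (x - t) ^ γ)) volume 0 1 := by
  refine (intervalIntegrable_rpow_mul_one_sub_rpow ha hb).mul_continuousOn
    (q.continuous.continuousOn.mul (ContinuousOn.rpow_const (by fun_prop) fun x hx => ?_))
  rw [uIcc_of_le zero_le_one] at hx
  exact Or.inl (by linarith [hx.1])

theorem intervalIntegrable_eval_mul (hα : 0 < α) (hβ : 0 < β) (ht : t < 0) (q : ℝ[X]) :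
    IntervalIntegrable (fun x => q.eval x * genJacobiWeight α β γ t x) volume 0 1 :=
  (intervalIntegrable_rpow_mul_one_sub_rpow_mul_eval (γ := γ) (a := α) (b := β) ht
    (by linarith) (by linarith) q).congr fun x _ => by simp only [genJacobiWeight]; ring

theorem intervalIntegrable_eval_mul_div_self (hα : 0 < α) (hβ : 0 < β) (ht : t < 0)
    (q : ℝ[X]) :
    IntervalIntegrable (fun x => q.eval x * (genJacobiWeight α β γ t x / x)) volume 0 1 := by
  refine (intervalIntegrable_rpow_mul_one_sub_rpow_mul_eval (γ := γ) (a := α - 1) (b := β) ht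
    (by linarith) (by linarith) q).congr fun x hx => ?_
  rw [uIoc_of_le zero_le_one] at hx
  simp only [genJacobiWeight, rpow_sub_one hx.1.ne']
  ring

theorem intervalIntegrable_eval_mul_div_one_sub (hα : 0 < α) (hβ : 0 < β) (ht : t < 0)
    (q : ℝ[X]) :
    IntervalIntegrable (fun x => q.eval x * (genJacobiWeight α β γ t x / (1 - x)))
      volume 0 1 := by
  refine intervalIntegrable_of_eqOn_Ioo zero_le_one (fun x hx => ?_)
    (intervalIntegrable_rpow_mul_one_sub_rpow_mul_eval (γ := γ) (a := α) (b := β - 1) ht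
      (by linarith) (by linarith) q)
  simp only [genJacobiWeight, rpow_sub_one (sub_pos.mpr hx.2).ne']
  ring

variable (γ) (hα : 0 < α) (hβ : 0 < β) (ht : t < 0)

noncomputable def momentFunctional : ℝ[X] →ₗ[ℝ] ℝ :=
  polyIntegral _ 0 1 (intervalIntegrable_eval_mul (γ := γ) hα hβ ht)

noncomputable def momentFunctionalDivX : ℝ[X] →ₗ[ℝ] ℝ :=
  polyIntegral _ 0 1 (intervalIntegrable_eval_mul_div_self (γ := γ) hα hβ ht)

noncomputable def momentFunctionalDivOneSubX : ℝ[X] →ₗ[ℝ] ℝ :=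
  polyIntegral _ 0 1 (intervalIntegrable_eval_mul_div_one_sub (γ := γ) hα hβ ht)

theorem momentFunctional_mul (p q : ℝ[X]) :
    momentFunctional γ hα hβ ht (p * q)
      = ∫ x in (0 : ℝ)..1, p.eval x * q.eval x * genJacobiWeight α β γ t x := by
  simp [momentFunctional, polyIntegral, mul_assoc]

theorem momentFunctionalDivX_mul (p q : ℝ[X]) :
    momentFunctionalDivX γ hα hβ ht (p * q)
      = ∫ x in (0 : ℝ)..1, p.eval x * q.eval x * genJacobiWeight α β γ t x / x := by
  simp [momentFunctionalDivX, polyIntegral, mul_div_assoc]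

theorem momentFunctionalDivOneSubX_mul (p q : ℝ[X]) :
    momentFunctionalDivOneSubX γ hα hβ ht (p * q)
      = ∫ x in (0 : ℝ)..1, p.eval x * q.eval x * genJacobiWeight α β γ t x / (1 - x) := by
  simp [momentFunctionalDivOneSubX, polyIntegral, mul_div_assoc]

theorem momentFunctionalDivX_X_mul (q : ℝ[X]) :
    momentFunctionalDivX γ hα hβ ht (X * q) = momentFunctional γ hα hβ ht q :=
  integral_eval_X_mul_mul_div_self (apply_zero hα) q 0 1

theorem momentFunctionalDivOneSubX_X_mul (q : ℝ[X]) :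
    momentFunctionalDivOneSubX γ hα hβ ht (X * q)
      = momentFunctionalDivOneSubX γ hα hβ ht q - momentFunctional γ hα hβ ht q := by
  rw [show X * q = q - (1 - X) * q by ring, map_sub]
  congr 1
  exact integral_eval_one_sub_X_mul_mul_div_one_sub (apply_one hβ) q 0 1

theorem momentFunctional_by_parts (F : ℝ[X]) :
    momentFunctional γ hα hβ ht (C (1 + α + β + γ) * F + (X - C t) * derivative F)
      = ((α * t) • momentFunctionalDivX γ hα hβ ht
          + (β * (1 - t)) • momentFunctionalDivOneSubX γ hα hβ ht) F := by
  set w := genJacobiWeight α β γ t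
  set G := C (1 + α + β + γ) * F + (X - C t) * derivative F
  have i1 := intervalIntegrable_eval_mul hα hβ ht (γ := γ) G
  have i2 := (intervalIntegrable_eval_mul_div_self hα hβ ht (γ := γ) F).const_mul (α * t)
  have i3 :=
    (intervalIntegrable_eval_mul_div_one_sub hα hβ ht (γ := γ) F).const_mul (β * (1 - t))
  have hderiv : ∀ x ∈ Ioo (0 : ℝ) 1, HasDerivAt (fun x => (x - t) * F.eval x * w x)
      (G.eval x * w x - α * t * (F.eval x * (w x / x))
        - β * (1 - t) * (F.eval x * (w x / (1 - x)))) x := by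
    intro x hx
    have hxt : x - t ≠ 0 := by linarith [hx.1]
    have hx0 : x ≠ 0 := hx.1.ne'
    have hx1 : 1 - x ≠ 0 := by linarith [hx.2]
    refine (((hasDerivAt_id' x).sub_const t).mul (F.hasDerivAt x)).mul (hasDerivAt ht hx)
      |>.congr_deriv ?_
    simp only [G, Pi.mul_apply, eval_add, eval_mul, eval_sub, eval_C, eval_X]
    field_simp
    ring
  have hftc := intervalIntegral.integral_eq_sub_of_hasDerivAt_of_le zero_le_one
    ((by fun_prop : Continuous fun x => (x - t) * F.eval x).continuousOn.mul
      (continuousOn hα hβ ht)) hderiv ((i1.sub i2).sub i3)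
  rw [intervalIntegral.integral_sub (i1.sub i2) i3, intervalIntegral.integral_sub i1 i2,
    intervalIntegral.integral_const_mul, intervalIntegral.integral_const_mul] at hftc
  simp only [Pi.mul_apply, apply_zero hα, apply_one hβ, mul_zero, sub_zero] at hftc
  simp only [momentFunctional, momentFunctionalDivX, momentFunctionalDivOneSubX, polyIntegral,
    LinearMap.add_apply, LinearMap.smul_apply, LinearMap.coe_mk, AddHom.coe_mk, smul_eq_mul]
  linarith

end genJacobiWeight

open genJacobiWeight in
theorem statement13
    (α β γ t : ℝ) (hα : 0 < α) (hβ : 0 < β) (ht : t < 0)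
    (P : ℕ → Polynomial ℝ) (h : ℕ → ℝ)
    (hmonic : ∀ n, (P n).Monic ∧ (P n).natDegree = n)
    (hpos : ∀ n, 0 < h n)
    (horth : ∀ m n, (∫ x in (0:ℝ)..1,
        (P m).eval x * (P n).eval x * genJacobiWeight α β γ t x)
      = if m = n then h n else 0)
    (a b : ℕ → ℝ) (hb0 : b 0 = 0)
    (hrec : ∀ n, ∀ x : ℝ, x * (P n).eval x
      = (P (n + 1)).eval x + a n * (P n).eval x + b n * (P (n - 1)).eval x)
    (R r rs : ℕ → ℝ)
    (hR : ∀ n, R n = β / h n *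
      ∫ y in (0:ℝ)..1, ((P n).eval y) ^ 2 * genJacobiWeight α β γ t y / (1 - y))
    (hr0 : r 0 = 0) (hrs0 : rs 0 = 0)
    (hr : ∀ n, 1 ≤ n → r n = β / h (n - 1) *
      ∫ y in (0:ℝ)..1, (P (n - 1)).eval y * (P n).eval y * genJacobiWeight α β γ t y / (1 - y))
    (hrs : ∀ n, 1 ≤ n → rs n = α / h (n - 1) *
      ∫ y in (0:ℝ)..1, (P (n - 1)).eval y * (P n).eval y * genJacobiWeight α β γ t y / y)
    :
    ∀ n : ℕ,
      (2 * n + 2 + α + β + γ) * a n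
        = 2 * (t - 1) * r n - 2 * t * rs n + (1 - t) * R n + (α + β + 1) * t - β := by
  intro n
  have horth' (m k : ℕ) :
      momentFunctional γ hα hβ ht (P m * P k) = if m = k then h k else 0 := by
    rw [momentFunctional_mul]
    exact horth m k
  have hibp := momentFunctional_by_parts γ hα hβ ht
  have he : (X * ((X - C t) * derivative (P n) - C (n : ℝ) * P n)).coeff n
      = t * rs n + (1 - t) * r n := by
    rcases n with _ | m
    · simp [hr0, hrs0]
    · have := linearMap_mul_succ_eq_of_by_parts hmonic horth' hibp m
      simp only [LinearMap.add_apply, LinearMap.smul_apply, smul_eq_mul, momentFunctionalDivX_mul,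
        momentFunctionalDivOneSubX_mul] at this
      rw [hr (m + 1) (by omega), hrs (m + 1) (by omega), Nat.add_sub_cancel]
      field_simp [(hpos m).ne']
      linear_combination -this
  have hnorm : momentFunctional γ hα hβ ht (P n ^ 2) = h n := by simpa [sq] using horth' n n
  have hB := linearMap_X_mul_sq_eq_of_by_parts hmonic horth' hibp n
  simp only [LinearMap.add_apply, LinearMap.smul_apply, smul_eq_mul, momentFunctionalDivX_X_mul,
    momentFunctionalDivOneSubX_X_mul, hnorm, he,
    linearMap_X_mul_mul_eq horth' hb0 (fun k => funext fun x => by simpa using hrec k x)] at hB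
  have hR' : R n * h n = β * momentFunctionalDivOneSubX γ hα hβ ht (P n ^ 2) := by
    rw [hR, sq, momentFunctionalDivOneSubX_mul]
    field_simp [(hpos n).ne']
  apply mul_right_cancel₀ (hpos n).ne'
  linear_combination -hB - (1 - t) * hR'
end
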